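/- For every isotropic system L on V, the number of graphic presentations of L, i.e., the number of triples (G, A, B) that are graphic presentations of L, is equal to (q − 1)·ε(L), where ε(L) is the number of Eulerian vectors of L. -/

import Mathlib

open Matrix

section Defs

variable {F : Type} [Field F] {V : Type} [Fintype V] [DecidableEq V]

/-- The bilinear form on `K = F × F`: `⟨(x,y),(x',y')⟩ = x·y' − x'·y`. -/
def formK (a b : F × F) : F := a.1 * b.2 - b.1 * a.2

/-- The bilinear form on `K^V`: `⟨A,A'⟩ = Σ_v ⟨A v, A' v⟩`. -/
def formKV (A B : V → F × F) : F := ∑ v, formK (A v) (B v)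

/-- An isotropic system: an `n`-dimensional subspace of `K^V` on which the form vanishes. -/
def IsIsotropic (L : Submodule F (V → F × F)) : Prop :=
  Module.finrank F L = Fintype.card V ∧ ∀ A ∈ L, ∀ B ∈ L, formKV A B = 0

/-- A labeled graph on `V` over `F`: a symmetric matrix with zero diagonal. -/
def IsLGraph (G : Matrix V V F) : Prop := G.IsSymm ∧ ∀ v, G v v = 0

/-- The `2n × 2n` matrix `D(A,B)` with four diagonal blocks
`[[diag Z, diag T],[diag X, diag Y]]` where `A = (X,Y)`, `B = (Z,T)`. -/
def Dmat (A B : V → F × F) : Matrix (V ⊕ V) (V ⊕ V) F :=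
  fromBlocks (diagonal fun v => (B v).1) (diagonal fun v => (B v).2)
    (diagonal fun v => (A v).1) (diagonal fun v => (A v).2)

/-- The diagonal entries of `det D(A,B) = (diag Z)(diag Y) − (diag X)(diag T)`. -/
def detD (A B : V → F × F) (v : V) : F := (B v).1 * (A v).2 - (A v).1 * (B v).2

/-- The `v`-th row of the `n × 2n` matrix `(I | G) · D(A,B)` viewed as a vector in `K^V`. -/
def presRow (G : Matrix V V F) (A B : V → F × F) (v : V) : V → F × F :=
  fun w => ((fromCols (1 : Matrix V V F) G * Dmat A B) v (Sum.inl w),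
            (fromCols (1 : Matrix V V F) G * Dmat A B) v (Sum.inr w))

/-- `(G, A, B)` is a graphic presentation of the isotropic system `L`:
`G` is a labeled graph, `det D(A,B) = c·I` with `c ≠ 0`, and the rows of
`(I | G)·D(A,B)` form a basis of `L`. -/
def IsGraphicPresentation (L : Submodule F (V → F × F)) (G : Matrix V V F)
    (A B : V → F × F) : Prop :=
  IsLGraph G ∧ (∃ c : F, c ≠ 0 ∧ ∀ v, detD A B v = c) ∧
  LinearIndependent F (presRow G A B) ∧
  Submodule.span F (Set.range (presRow G A B)) = L

/-- `G` is a fundamental graph of `L`. -/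
def IsFundamental (L : Submodule F (V → F × F)) (G : Matrix V V F) : Prop :=
  ∃ A B, IsGraphicPresentation L G A B

/-- The local complementation operation `G *_r v`. -/
def starOp (G : Matrix V V F) (r : F) (v : V) : Matrix V V F :=
  Matrix.of fun u w => if u = v ∨ w = v ∨ u = w then G u w else G u w + r * G v u * G v w

/-- The operation `G ∘_s v`, multiplying the edges at `v` by `s`. -/
def circOp (G : Matrix V V F) (s : F) (v : V) : Matrix V V F :=
  Matrix.of fun u w => if u = v ∨ w = v then s * G u w else G u w

/-- One local operation. -/
def LocalStep (G H : Matrix V V F) : Prop :=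
  (∃ v r, H = starOp G r v) ∨ (∃ v s, s ≠ (0 : F) ∧ H = circOp G s v)

/-- Two labeled graphs are locally equivalent if one is obtained from the other by a
finite sequence of operations `*_r v` and `∘_s v`. -/
def LocallyEquivalent (G H : Matrix V V F) : Prop :=
  Relation.ReflTransGen LocalStep G H

/-- A complete vector: all coordinates nonzero. -/
def CompleteVec (A : V → F × F) : Prop := ∀ v, A v ≠ 0

/-- `E_{v,x}`: the vector equal to `x` at `v` and `0` elsewhere. -/
def Ev (v : V) (x : F × F) : V → F × F := fun w => if w = v then x else 0

/-- `Â`: the span of the vectors `A_v = E_{v, A v}`. -/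
def hatSub (A : V → F × F) : Submodule F (V → F × F) :=
  Submodule.span F (Set.range fun v => Ev v (A v))

/-- An Eulerian vector of `L`: a complete vector with `Â ∩ L = 0`. -/
def IsEulerian (L : Submodule F (V → F × F)) (A : V → F × F) : Prop :=
  CompleteVec A ∧ hatSub A ⊓ L = ⊥

/-- `ε(L)`: the number of Eulerian vectors of `L`. -/
noncomputable def eulerCount (L : Submodule F (V → F × F)) : ℕ :=
  Set.ncard {A | IsEulerian L A}

/-- The number of pairs `(A,B)` such that `(G,A,B)` is a graphic presentation of `L`. -/
noncomputable def lamCount (L : Submodule F (V → F × F)) (G : Matrix V V F) : ℕ :=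
  Set.ncard {p : (V → F × F) × (V → F × F) | IsGraphicPresentation L G p.1 p.2}

/-- The number of graphic presentations (triples `(G,A,B)`) of `L`. -/
noncomputable def presCount (L : Submodule F (V → F × F)) : ℕ :=
  Set.ncard {t : Matrix V V F × (V → F × F) × (V → F × F) |
    IsGraphicPresentation L t.1 t.2.1 t.2.2}

/-- `l(G)`: the number of labeled graphs locally equivalent to `G`. -/
noncomputable def locCount (G : Matrix V V F) : ℕ :=
  Set.ncard {H | LocallyEquivalent G H}

/-- Connectivity of a labeled graph: the simple graph with edges `{v,w}` with
`g_{vw} ≠ 0` is connected. -/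
def GraphConnected (G : Matrix V V F) : Prop :=
  (SimpleGraph.fromRel fun v w => G v w ≠ 0).Connected

end Defs

variable {F : Type} [Field F] [Fintype F] {V : Type} [Fintype V] [DecidableEq V] [Nonempty V]


section Aux
variable {F : Type} [Field F] {V : Type} [Fintype V] [DecidableEq V]

set_option linter.unusedSectionVars false

lemma presRow_apply (G : Matrix V V F) (A B : V → F × F) (v w : V) :
    presRow G A B v w = (if v = w then B v else 0) + G v w • A w := by
  simp only [presRow, Dmat, fromCols_mul_fromBlocks, fromCols_apply_inl,
    fromCols_apply_inr, Matrix.add_apply, Matrix.one_mul, mul_diagonal]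
  ext <;> simp [Prod.smul_def, one_apply] <;> split <;> simp_all

lemma formK_self (a : F × F) : formK a a = 0 := by simp [formK]
lemma formK_zero_left (a : F × F) : formK 0 a = 0 := by simp [formK]
lemma formK_add_left (a b c : F × F) : formK (a + b) c = formK a c + formK b c := by
  simp [formK]; ring
lemma formK_smul_left (t : F) (a b : F × F) : formK (t • a) b = t * formK a b := by
  simp [formK, Prod.smul_def, smul_eq_mul]; ring
lemma formK_smul_right (t : F) (a b : F × F) : formK a (t • b) = t * formK a b := by
  simp [formK, Prod.smul_def, smul_eq_mul]; ring

open Classical in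
noncomputable def coeffOf (x a : F × F) : F := if a.1 = 0 then x.2 / a.2 else x.1 / a.1

lemma eq_coeffOf_smul {x a : F × F} (ha : a ≠ 0) (h : formK x a = 0) :
    x = coeffOf x a • a := by
  classical
  have h' : x.1 * a.2 = a.1 * x.2 := by unfold formK at h; linear_combination h
  rcases eq_or_ne a.1 0 with h1 | h1
  · have h2 : a.2 ≠ 0 := fun h2 => ha (Prod.ext h1 h2)
    have hx1 : x.1 = 0 := by
      have hz : x.1 * a.2 = 0 := by rw [h', h1, zero_mul]
      exact (mul_eq_zero.mp hz).resolve_right h2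
    have hc : coeffOf x a = x.2 / a.2 := by simp [coeffOf, h1]
    ext
    · simp [hc, Prod.smul_def, hx1, h1]
    · simp [hc, Prod.smul_def, div_mul_cancel₀ _ h2]
  · have hc : coeffOf x a = x.1 / a.1 := by simp [coeffOf, h1]
    ext
    · simp [hc, Prod.smul_def, div_mul_cancel₀ _ h1]
    · simp only [hc, Prod.smul_def, Prod.smul_snd, smul_eq_mul]
      field_simp
      linear_combination -h'

lemma smul_ne_zero_iff' {t : F} {a : F × F} (ha : a ≠ 0) : t • a = 0 ↔ t = 0 := by
  rw [smul_eq_zero]; simp [ha]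

/-- pairing with `A_w` as a linear map. -/
def pairAt (A : V → F × F) (w : V) : (V → F × F) →ₗ[F] F where
  toFun x := formK (x w) (A w)
  map_add' x y := by simp [formK_add_left]
  map_smul' t x := by simp [formK_smul_left]

lemma pair_presRow (G : Matrix V V F) (A B : V → F × F) (v w : V) :
    formK (presRow G A B v w) (A w) = if w = v then detD A B v else 0 := by
  rw [presRow_apply, formK_add_left, formK_smul_left, formK_self, mul_zero, add_zero]
  rcases eq_or_ne w v with rfl | h
  · simp [formK, detD]
  · simp [Ne.symm h, formK_zero_left, h]


lemma detD_eq_formK (A B : V → F × F) (v : V) : detD A B v = formK (B v) (A v) := rfl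

lemma Ev_smul (v : V) (t : F) (a : F × F) : Ev v (t • a) = t • Ev v a := by
  funext u; simp only [Ev, Pi.smul_apply]; split <;> simp

lemma mem_hatSub_of_pair_zero {A x : V → F × F} (hA : CompleteVec A)
    (h : ∀ w, formK (x w) (A w) = 0) : x ∈ hatSub A := by
  have hx : x = ∑ w, coeffOf (x w) (A w) • Ev w (A w) := by
    funext u
    rw [Finset.sum_apply]
    have : ∀ w, (coeffOf (x w) (A w) • Ev w (A w)) u
        = if u = w then x w else 0 := by
      intro w
      by_cases hu : u = w
      · subst hu
        simp only [Pi.smul_apply, Ev, if_pos rfl, if_pos rfl]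
        exact (eq_coeffOf_smul (hA u) (h u)).symm
      · simp [Ev, hu, Pi.smul_apply]
    simp [this]
  rw [hx]
  exact Submodule.sum_mem _ fun w _ => Submodule.smul_mem _ _
    (Submodule.subset_span ⟨w, rfl⟩)

lemma pair_zero_of_mem_hatSub {A x : V → F × F} (hx : x ∈ hatSub A) (w : V) :
    formK (x w) (A w) = 0 := by
  have : hatSub A ≤ LinearMap.ker (pairAt A w) := by
    rw [hatSub, Submodule.span_le]
    rintro _ ⟨v, rfl⟩
    simp only [SetLike.mem_coe, LinearMap.mem_ker, pairAt, LinearMap.coe_mk, AddHom.coe_mk]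
    by_cases hw : w = v
    · subst hw; simp [Ev, formK_self]
    · simp [Ev, hw, formK_zero_left]
  exact this hx

lemma eulerian_key {L : Submodule F (V → F × F)} {A : V → F × F}
    (hE : IsEulerian L A) {x : V → F × F} (hxL : x ∈ L)
    (h : ∀ w, formK (x w) (A w) = 0) : x = 0 := by
  have hx : x ∈ hatSub A ⊓ L := ⟨mem_hatSub_of_pair_zero hE.1 h, hxL⟩
  rw [hE.2] at hx
  exact hx

lemma complete_of_pres {L : Submodule F (V → F × F)} {G : Matrix V V F}
    {A B : V → F × F} (hP : IsGraphicPresentation L G A B) : CompleteVec A := by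
  obtain ⟨c, hc, hdet⟩ := hP.2.1
  intro v hv
  apply hc
  rw [← hdet v, detD_eq_formK, hv]
  simp [formK]

lemma presRow_mem {L : Submodule F (V → F × F)} {G : Matrix V V F}
    {A B : V → F × F} (hP : IsGraphicPresentation L G A B) (v : V) :
    presRow G A B v ∈ L := by
  rw [← hP.2.2.2]
  exact Submodule.subset_span ⟨v, rfl⟩

lemma eulerian_of_pres {L : Submodule F (V → F × F)} {G : Matrix V V F}
    {A B : V → F × F} (hL : IsIsotropic L) (hP : IsGraphicPresentation L G A B) :
    IsEulerian L A := by
  obtain ⟨c, hc, hdet⟩ := hP.2.1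
  have hA : CompleteVec A := complete_of_pres hP
  refine ⟨hA, ?_⟩
  rw [eq_bot_iff]
  rintro x ⟨hx1, hx2⟩
  simp only [Submodule.mem_bot]
  obtain ⟨t, ht⟩ : ∃ t : V → F, ∀ w, x w = t w • A w :=
    ⟨_, fun w => eq_coeffOf_smul (hA w) (pair_zero_of_mem_hatSub hx1 w)⟩
  have key : ∀ v, t v * c = 0 := by
    intro v
    have h0 : formKV (presRow G A B v) x = 0 :=
      hL.2 _ (presRow_mem hP v) _ hx2
    rw [formKV] at h0
    have heq : ∀ w, formK (presRow G A B v w) (x w)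
        = t w * (if w = v then c else 0) := by
      intro w
      rw [ht w, formK_smul_right, pair_presRow, hdet]
    rw [Finset.sum_congr rfl (fun w _ => heq w)] at h0
    simpa [mul_ite, Finset.sum_ite_eq'] using h0
  funext v
  have h1 : t v = 0 := by
    rcases mul_eq_zero.mp (key v) with h | h
    · exact h
    · exact absurd h hc
  rw [Pi.zero_apply, ht v, h1, zero_smul]

lemma formK_sub_left (a b c : F × F) : formK (a - b) c = formK a c - formK b c := by
  simp only [formK, Prod.fst_sub, Prod.snd_sub]; ring

lemma formK_anti (a b : F × F) : formK a b = - formK b a := by simp only [formK]; ring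

lemma pres_unique {L : Submodule F (V → F × F)} (hL : IsIsotropic L)
    {A B B' : V → F × F} {G G' : Matrix V V F}
    (hP : IsGraphicPresentation L G A B) (hP' : IsGraphicPresentation L G' A B')
    (hcc : ∀ v, detD A B v = detD A B' v) : G = G' ∧ B = B' := by
  have hE := eulerian_of_pres hL hP
  have hA := hE.1
  have hrow : ∀ v, presRow G A B v = presRow G' A B' v := by
    intro v
    have hd : presRow G A B v - presRow G' A B' v = 0 := by
      apply eulerian_key hE (Submodule.sub_mem _ (presRow_mem hP v) (presRow_mem hP' v))
      intro w
      rw [Pi.sub_apply, formK_sub_left, pair_presRow, pair_presRow, hcc]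
      exact sub_self _
    funext w
    simpa [Pi.sub_apply, sub_eq_zero] using congrFun hd w
  have hrw : ∀ v w, (if v = w then B v else 0) + G v w • A w
      = (if v = w then B' v else 0) + G' v w • A w := by
    intro v w
    have := congrFun (hrow v) w
    rwa [presRow_apply, presRow_apply] at this
  constructor
  · ext v w
    rcases eq_or_ne v w with rfl | hvw
    · rw [hP.1.2 v, hP'.1.2 v]
    · have := hrw v w
      rw [if_neg hvw, if_neg hvw, zero_add, zero_add] at this
      have h2 : (G v w - G' v w) • A w = 0 := by rw [sub_smul, this, sub_self]
      have h3 := (smul_ne_zero_iff' (hA w)).mp h2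
      linear_combination h3
  · funext v
    have := hrw v v
    rw [if_pos rfl, if_pos rfl, hP.1.2 v, hP'.1.2 v] at this
    simpa using this

lemma pres_exists {L : Submodule F (V → F × F)} (hL : IsIsotropic L)
    {A : V → F × F} (hE : IsEulerian L A) {c : F} (hc : c ≠ 0) :
    ∃ G B, IsGraphicPresentation L G A B ∧ ∀ v, detD A B v = c := by
  classical
  have hA := hE.1
  set φ : L →ₗ[F] (V → F) := LinearMap.pi (fun w => (pairAt A w).comp L.subtype) with hφ
  have hφapp : ∀ (x : L) (w : V), φ x w = formK ((x : V → F × F) w) (A w) := fun x w => rfl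
  have hφinj : Function.Injective φ := by
    rw [← LinearMap.ker_eq_bot, eq_bot_iff]
    rintro x hx
    simp only [SetLike.mem_coe, LinearMap.mem_ker] at hx
    have hz : (x : V → F × F) = 0 := by
      apply eulerian_key hE x.2
      intro w
      rw [← hφapp x w, hx, Pi.zero_apply]
    simpa [Submodule.mem_bot] using Subtype.ext hz
  have hφsurj : Function.Surjective φ := by
    have hfr : Module.finrank F L = Module.finrank F (V → F) := by
      rw [hL.1, Module.finrank_pi]
    exact (LinearMap.injective_iff_surjective_of_finrank_eq_finrank hfr).mp hφinj
  choose C hC using fun v => hφsurj (fun w => if w = v then c else 0)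
  have hCpair : ∀ v w, formK ((C v : V → F × F) w) (A w) = if w = v then c else 0 := by
    intro v w
    rw [← hφapp (C v) w, hC v]
  set g : Matrix V V F :=
    Matrix.of (fun v w => if v = w then 0 else coeffOf ((C v : V → F × F) w) (A w)) with hg
  set B : V → F × F := fun v => (C v : V → F × F) v with hB
  have hgd : ∀ v, g v v = 0 := fun v => if_pos rfl
  have hrow : ∀ v, presRow g A B v = (C v : V → F × F) := by
    intro v
    funext w
    rw [presRow_apply]
    rcases eq_or_ne v w with rfl | hvw
    · rw [if_pos rfl, hgd, zero_smul, add_zero]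
    · have h0 : formK ((C v : V → F × F) w) (A w) = 0 := by
        rw [hCpair]; exact if_neg (Ne.symm hvw)
      have : g v w = coeffOf ((C v : V → F × F) w) (A w) := by
        simp [hg, Matrix.of_apply, if_neg hvw]
      rw [if_neg hvw, zero_add, this]
      exact (eq_coeffOf_smul (hA w) h0).symm
  have hdet : ∀ v, detD A B v = c := by
    intro v
    rw [detD_eq_formK]
    simpa using hCpair v v
  -- symmetry
  have hsym : ∀ v w, g w v = g v w := by
    intro v w
    rcases eq_or_ne v w with rfl | hvw
    · rfl
    · have h0 : formKV (C v : V → F × F) (C w : V → F × F) = 0 :=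
        hL.2 _ (C v).2 _ (C w).2
      rw [formKV] at h0
      have hpt : ∀ u, formK ((C v : V → F × F) u) ((C w : V → F × F) u)
          = (if u = v then g w v * c else 0) - (if u = w then g v w * c else 0) := by
        intro u
        have hv' := congrFun (hrow v) u
        have hw' := congrFun (hrow w) u
        rw [presRow_apply] at hv' hw'
        rcases eq_or_ne u v with rfl | huv
        · rw [← hv', ← hw', if_pos rfl, hgd, zero_smul, add_zero,
            if_neg (Ne.symm hvw), zero_add, formK_smul_right]
          rw [if_pos rfl, if_neg hvw, sub_zero]
          have : formK (B u) (A u) = c := by rw [← detD_eq_formK, hdet]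
          rw [this]
        · rcases eq_or_ne u w with rfl | huw
          · rw [← hv', ← hw', if_pos rfl, hgd, zero_smul, add_zero,
              if_neg (Ne.symm huv), zero_add, formK_smul_left]
            rw [if_neg huv, if_pos rfl, zero_sub]
            have : formK (A u) (B u) = -c := by
              rw [formK_anti, ← detD_eq_formK, hdet]
            rw [this]; ring
          · rw [← hv', ← hw', if_neg (Ne.symm huv), if_neg (Ne.symm huw),
              zero_add, zero_add, formK_smul_left, formK_smul_right, formK_self]
            rw [if_neg huv, if_neg huw, sub_zero, mul_zero, mul_zero]
      rw [Finset.sum_congr rfl (fun u _ => hpt u), Finset.sum_sub_distrib,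
        Finset.sum_ite_eq' Finset.univ v, Finset.sum_ite_eq' Finset.univ w] at h0
      simp only [Finset.mem_univ, if_pos] at h0
      have := sub_eq_zero.mp h0
      exact mul_right_cancel₀ hc this
  have hLI : LinearIndependent F (presRow g A B) := by
    rw [Fintype.linearIndependent_iff]
    intro a ha w
    have h1 := congrArg (pairAt A w) ha
    rw [map_sum, map_zero] at h1
    have h2 : ∀ v, (pairAt A w) (a v • presRow g A B v)
        = a v * (if w = v then c else 0) := by
      intro v
      rw [LinearMap.map_smul, smul_eq_mul]
      congr 1
      show formK (presRow g A B v w) (A w) = _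
      rw [pair_presRow, hdet]
    rw [Finset.sum_congr rfl (fun v _ => h2 v)] at h1
    simp only [mul_ite, mul_zero, Finset.sum_ite_eq, Finset.mem_univ, if_pos] at h1
    exact (mul_eq_zero.mp h1).resolve_right hc
  have hspan : Submodule.span F (Set.range (presRow g A B)) = L := by
    have hle : Submodule.span F (Set.range (presRow g A B)) ≤ L := by
      rw [Submodule.span_le]
      rintro _ ⟨v, rfl⟩
      rw [hrow v]
      exact (C v).2
    apply Submodule.eq_of_le_of_finrank_eq hle
    rw [finrank_span_eq_card hLI, hL.1]
  refine ⟨g, B, ⟨⟨?_, hgd⟩, ⟨c, hc, hdet⟩, hLI, hspan⟩, hdet⟩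
  ext v w
  rw [Matrix.transpose_apply]
  exact hsym v w


end Aux

/-- The number of graphic presentations of `L` equals `(q − 1)·ε(L)`. -/
theorem presCount_eq (hchar : ringChar F ≠ 2)
    (L : Submodule F (V → F × F)) (hL : IsIsotropic L) :
    presCount L = (Fintype.card F - 1) * eulerCount L := by
  classical
  obtain ⟨v0⟩ := ‹Nonempty V›
  set S : Set (Matrix V V F × (V → F × F) × (V → F × F)) :=
    {t | IsGraphicPresentation L t.1 t.2.1 t.2.2} with hS
  set T : Set ((V → F × F) × F) := {p | IsEulerian L p.1 ∧ p.2 ≠ 0} with hT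
  have hdc : ∀ {G : Matrix V V F} {A B : V → F × F},
      IsGraphicPresentation L G A B → detD A B v0 ≠ 0 := by
    rintro G A B ⟨_, ⟨c, hc, hdet⟩, _⟩
    rw [hdet]; exact hc
  let f : S → T := fun t =>
    ⟨(t.1.2.1, detD t.1.2.1 t.1.2.2 v0), eulerian_of_pres hL t.2, hdc t.2⟩
  have hbij : Function.Bijective f := by
    constructor
    · rintro ⟨⟨G, A, B⟩, ht⟩ ⟨⟨G', A', B'⟩, ht'⟩ heq
      simp only [f, Subtype.mk.injEq, Prod.mk.injEq] at heq
      obtain ⟨hAA, hcc⟩ := heq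
      subst hAA
      have hcv : ∀ v, detD A B v = detD A B' v := by
        intro v
        obtain ⟨c, hc, hdet⟩ := ht.2.1
        obtain ⟨c', hc', hdet'⟩ := ht'.2.1
        rw [hdet, hdet', ← hdet v0, ← hdet' v0, hcc]
      obtain ⟨hG, hB⟩ := pres_unique hL ht ht' hcv
      subst hG; subst hB
      rfl
    · rintro ⟨⟨A, c⟩, hE, hc⟩
      obtain ⟨G, B, hP, hdet⟩ := pres_exists hL hE hc
      exact ⟨⟨(G, A, B), hP⟩, Subtype.ext (Prod.ext rfl (hdet v0))⟩
  have hST : Nat.card S = Nat.card T := Nat.card_eq_of_bijective f hbij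
  have hTprod : T = {A : V → F × F | IsEulerian L A} ×ˢ {c : F | c ≠ 0} := by
    ext ⟨A, c⟩
    simp [hT, Set.mem_prod]
  have hne : ({c : F | c ≠ 0}).ncard = Fintype.card F - 1 := by
    have h0 : {c : F | c ≠ 0} = (({0} : Set F)ᶜ) := by ext c; simp
    have h1 := Set.ncard_add_ncard_compl ({0} : Set F)
    simp only [Set.ncard_singleton, Set.ncard_univ, Nat.card_eq_fintype_card] at h1
    rw [h0]
    omega
  have hTcard : Nat.card T = eulerCount L * (Fintype.card F - 1) := by
    rw [hTprod, Nat.card_congr (Equiv.Set.prod _ _), Nat.card_prod,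
      Nat.card_coe_set_eq, Nat.card_coe_set_eq, hne]
    rfl
  calc presCount L = Nat.card S := (Nat.card_coe_set_eq S).symm
    _ = eulerCount L * (Fintype.card F - 1) := by rw [hST, hTcard]
    _ = (Fintype.card F - 1) * eulerCount L := Nat.mul_comm _ _
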